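/- Witnessed composition preserves distributional equivalence: let L be (f,h)-tuple-substitutable, let ρ be a binary linear nondeleting template with parent arity e ≤ f and child arities d_B, d_C ≤ f, and let E be a concrete arity-e sentence context with E[ρ(x,y)] ∈ L. If u ≡_L^{d_B} x and v ≡_L^{d_C} y, then ρ(u,v) ≡_L^e ρ(x,y). -/

import Mathlib

structure SContext (α : Type) (d : ℕ) where
  perm : Equiv.Perm (Fin d)
  bound : Fin (d + 1) → List α

def SContext.fill {α : Type} {d : ℕ} (E : SContext α d) (x : Fin d → List α) : List α :=
  (List.ofFn fun i : Fin d => E.bound i.castSucc ++ x (E.perm i)).flatten ++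
    E.bound (Fin.last d)

def tupleDist {α : Type} (L : Set (List α)) (d : ℕ) (x : Fin d → List α) :
    Set (SContext α d) :=
  {E | E.fill x ∈ L}

def TupleSubstitutable {α M : Type} (L : Set (List α)) (f : ℕ) (h : List α → M) : Prop :=
  ∀ d, 1 ≤ d → d ≤ f → ∀ x y : Fin d → List α,
    (∀ i, h (x i) = h (y i)) →
    (tupleDist L d x ∩ tupleDist L d y).Nonempty →
    tupleDist L d x = tupleDist L d y

/-- Typed distributional equivalence `u ≡_L^d x`. -/
def TypedEquiv {α M : Type} (L : Set (List α)) (h : List α → M) (d : ℕ)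
    (u x : Fin d → List α) : Prop :=
  (∀ i, h (u i) = h (x i)) ∧ tupleDist L d u = tupleDist L d x

abbrev Tmpl (α : Type) (dB dC e : ℕ) := Fin e → List (α ⊕ (Fin dB ⊕ Fin dC))

/-- Simultaneous substitution `ρ(u,v)`. -/
def substT {α : Type} {dB dC e : ℕ} (tmpl : Tmpl α dB dC e)
    (u : Fin dB → List α) (v : Fin dC → List α) : Fin e → List α :=
  fun j => (tmpl j).flatMap fun s =>
    match s with
    | Sum.inl a => [a]
    | Sum.inr (Sum.inl i) => u i
    | Sum.inr (Sum.inr i) => v i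

/-!
The context `E`, with the template `ρ` plugged into its holes and the right tuple `y` fixed, is
itself an arity-`d_B` context `E_B` with `E_B[w] = E[ρ(w, y)]`: since every variable of `ρ`
occurs exactly once, the composite is again a word in which each variable occurs once, and
such a word is the word of a context. Likewise `E_C[w] = E[ρ(u, w)]`. So `E[ρ(x, y)] ∈ L`
transfers along `u ≡ x` to `E[ρ(u, y)] ∈ L` and then along `v ≡ y` to `E[ρ(u, v)] ∈ L`.
Now `E` is a context shared by `ρ(u, v)` and `ρ(x, y)`, whose `h`-types agree because `h` is
multiplicative, and substitutability at arity `e` makes their distributions equal.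
-/

-- Core derives `BEq` for `Sum` but provides no `LawfulBEq` instance for it.
instance Sum.instLawfulBEq {α β : Type} [BEq α] [BEq β] [LawfulBEq α] [LawfulBEq β] :
    LawfulBEq (α ⊕ β) where
  eq_of_beq {a b} hab := by
    cases a <;> cases b
    · exact congrArg Sum.inl (eq_of_beq hab)
    · exact absurd hab Bool.false_ne_true
    · exact absurd hab Bool.false_ne_true
    · exact congrArg Sum.inr (eq_of_beq hab)
  rfl {a} := by
    cases a with
    | inl a => exact beq_self_eq_true a
    | inr b => exact beq_self_eq_true b

lemma List.flatten_ofFn_append_singleton {γ : Type} :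
    ∀ {n : ℕ} (A : Fin (n + 1) → List γ) (x : Fin n → γ),
      (List.ofFn fun k => A k.castSucc ++ [x k]).flatten ++ A (Fin.last n)
        = A 0 ++ (List.ofFn fun k => x k :: A k.succ).flatten
  | 0, A, x => by simp
  | n + 1, A, x => by
    have ih := List.flatten_ofFn_append_singleton (fun k => A k.succ) (fun k => x k.succ)
    simp only [Fin.succ_castSucc] at ih
    rw [List.ofFn_succ, List.ofFn_succ, List.flatten_cons, List.flatten_cons, ← Fin.succ_last,
      List.append_assoc, List.append_assoc, ih]
    simp

namespace Word

variable {α β γ : Type}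

def subst (w : β → List α) (s : List (α ⊕ β)) : List α :=
  s.flatMap (Sum.elim (fun a => [a]) w)

def bindVars (s : List (α ⊕ β)) (W : β → List (α ⊕ γ)) : List (α ⊕ γ) :=
  s.flatMap (Sum.elim (fun a => [Sum.inl a]) W)

@[simp] lemma subst_append (w : β → List α) (s t : List (α ⊕ β)) :
    subst w (s ++ t) = subst w s ++ subst w t :=
  List.flatMap_append

lemma subst_flatten (w : β → List α) (L : List (List (α ⊕ β))) :
    subst w L.flatten = (L.map (subst w)).flatten := by
  rw [subst, List.flatten_eq_flatMap, List.flatMap_assoc, List.flatMap_def]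
  rfl

@[simp] lemma subst_singleton_inr (w : β → List α) (b : β) : subst w [Sum.inr b] = w b := by
  simp [subst]

@[simp] lemma subst_map_inl (w : β → List α) (c : List α) : subst w (c.map Sum.inl) = c := by
  simp [subst, List.flatMap_map]

lemma subst_bindVars (w : γ → List α) (s : List (α ⊕ β)) (W : β → List (α ⊕ γ)) :
    subst w (bindVars s W) = subst (fun b => subst w (W b)) s := by
  simp only [subst, bindVars, List.flatMap_assoc]
  congr 1
  funext c
  cases c <;> simp

lemma apply_subst_congr {M : Type} [Monoid M] (h : List α → M)
    (hmul : ∀ a b : List α, h (a ++ b) = h a * h b) {w w' : β → List α}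
    (hw : ∀ b, h (w b) = h (w' b)) (s : List (α ⊕ β)) : h (subst w s) = h (subst w' s) := by
  induction s with
  | nil => rfl
  | cons c s ih =>
    rw [← List.singleton_append, subst_append, subst_append, hmul, hmul, ih]
    cases c with
    | inl a => rfl
    | inr b => simp only [subst_singleton_inr, hw]

lemma exists_eq_map_inl_append_flatMap :
    ∀ s : List (α ⊕ β), ∃ (c : List α) (P : List (β × List α)),
      s = c.map Sum.inl ++ P.flatMap fun p => Sum.inr p.1 :: p.2.map Sum.inl
  | [] => ⟨[], [], rfl⟩
  | .inl a :: s => by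
    obtain ⟨c, P, rfl⟩ := exists_eq_map_inl_append_flatMap s
    exact ⟨a :: c, P, rfl⟩
  | .inr b :: s => by
    obtain ⟨c, P, rfl⟩ := exists_eq_map_inl_append_flatMap s
    exact ⟨[], (b, c) :: P, by simp⟩

variable [BEq α] [LawfulBEq α] [BEq β] [LawfulBEq β]

@[simp] lemma count_inr_map_inl (c : List α) (b : β) :
    (c.map Sum.inl).count (Sum.inr b) = 0 :=
  List.count_eq_zero.mpr (by simp)

lemma count_inr_map_inl_append_flatMap (c : List α) (P : List (β × List α)) (b : β) :
    (c.map Sum.inl ++ P.flatMap fun p : β × List α => Sum.inr p.1 :: p.2.map Sum.inl).count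
      (Sum.inr b)
      = (P.map Prod.fst).count b := by
  induction P with
  | nil => simp
  | cons p P ih =>
    simp only [List.count_append, List.flatMap_cons, List.count_cons, List.map_cons,
      count_inr_map_inl, zero_add] at ih ⊢
    rw [ih, add_comm]
    rfl

lemma count_inr_bindVars [BEq γ] [LawfulBEq γ] [Fintype β] (s : List (α ⊕ β))
    (W : β → List (α ⊕ γ)) (c : γ) :
    (bindVars s W).count (Sum.inr c) = ∑ b, s.count (Sum.inr b) * (W b).count (Sum.inr c) := by
  classical
  induction s with
  | nil => simp [bindVars]
  | cons a s ih =>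
    rw [bindVars, List.flatMap_cons, List.count_append, ← bindVars, ih]
    cases a with
    | inl a => simp
    | inr b₀ => simp [List.count_cons, add_mul, Finset.sum_add_distrib, add_comm]

end Word

lemma substT_apply {α : Type} {dB dC e : ℕ} (tmpl : Tmpl α dB dC e)
    (u : Fin dB → List α) (v : Fin dC → List α) (j : Fin e) :
    substT tmpl u v j = Word.subst (Sum.elim u v) (tmpl j) := by
  unfold substT Word.subst
  congr 1
  funext c
  rcases c with a | i | k <;> rfl

lemma TypedEquiv.fill_mem_iff {α M : Type} {L : Set (List α)} {h : List α → M} {d : ℕ}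
    {u x : Fin d → List α} (hux : TypedEquiv L h d u x) (E : SContext α d) :
    E.fill u ∈ L ↔ E.fill x ∈ L :=
  Set.ext_iff.mp hux.2 E

namespace SContext

variable {α : Type} {d : ℕ}

def word (E : SContext α d) : List (α ⊕ Fin d) :=
  (List.ofFn fun k => (E.bound k.castSucc).map Sum.inl ++ [Sum.inr (E.perm k)]).flatten ++
    (E.bound (Fin.last d)).map Sum.inl

lemma fill_eq_subst_word (E : SContext α d) (w : Fin d → List α) :
    E.fill w = Word.subst w E.word := by
  simp [fill, word, Word.subst_flatten, List.map_ofFn, Function.comp_def]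

lemma word_eq_map_inl_append (E : SContext α d) :
    E.word = (E.bound 0).map Sum.inl ++
      (List.ofFn fun k => Sum.inr (E.perm k) :: (E.bound k.succ).map Sum.inl).flatten :=
  List.flatten_ofFn_append_singleton (fun k => (E.bound k).map Sum.inl) _

variable [BEq α] [LawfulBEq α]

lemma count_word (E : SContext α d) (j : Fin d) : E.word.count (Sum.inr j) = 1 := by
  simp only [word, List.count_append, List.count_flatten, List.map_ofFn, Function.comp_def,
    List.sum_ofFn, Word.count_inr_map_inl, List.count_singleton, beq_iff_eq, Sum.inr.injEq,
    zero_add, add_zero]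
  exact (Equiv.sum_comp E.perm fun i => if i = j then 1 else 0).trans (by simp)

-- Read off the constant blocks and the order of the variables of `s`.
lemma exists_word_eq (s : List (α ⊕ Fin d)) (hs : ∀ i, s.count (Sum.inr i) = 1) :
    ∃ E : SContext α d, E.word = s := by
  obtain ⟨c₀, P, rfl⟩ := Word.exists_eq_map_inl_append_flatMap s
  have hcount (i : Fin d) : (P.map Prod.fst).count i = 1 :=
    (Word.count_inr_map_inl_append_flatMap c₀ P i).symm.trans (hs i)
  have hnodup : (P.map Prod.fst).Nodup := List.nodup_iff_count_le_one.mpr fun i => (hcount i).le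
  have hmem (i : Fin d) : i ∈ P.map Prod.fst :=
    List.count_pos_iff.mp (by rw [hcount i]; exact one_pos)
  let σ := hnodup.getEquivOfForallMemList _ hmem
  have hlen : (P.map Prod.fst).length = d := Fin.equiv_iff_eq.mp ⟨σ⟩
  refine ⟨⟨(finCongr hlen).symm.trans σ, fun k => (c₀ :: P.map Prod.snd).getD k []⟩, ?_⟩
  rw [word_eq_map_inl_append, List.flatMap_def]
  congr 2
  refine List.ext_getElem (by simpa using hlen.symm) fun k _ hk => ?_
  rw [List.length_map] at hk
  simp [σ, List.getElem?_eq_getElem hk]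

variable {e : ℕ} (E : SContext α e)

lemma exists_fill_eq_fill_subst (W : Fin e → List (α ⊕ Fin d))
    (hW : ∀ i, ∑ j, (W j).count (Sum.inr i) = 1) :
    ∃ E' : SContext α d, ∀ w, E'.fill w = E.fill fun j => Word.subst w (W j) := by
  obtain ⟨E', hE'⟩ := exists_word_eq (Word.bindVars E.word W) fun i => by
    simp [Word.count_inr_bindVars, count_word, hW]
  exact ⟨E', fun w => by rw [fill_eq_subst_word, hE', Word.subst_bindVars, fill_eq_subst_word]⟩

variable {dB dC : ℕ} (tmpl : Tmpl α dB dC e)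

lemma exists_fill_eq_fill_substT_left
    (hx : ∀ i : Fin dB, ∑ j, (tmpl j).count (Sum.inr (Sum.inl i)) = 1) (y : Fin dC → List α) :
    ∃ EB : SContext α dB, ∀ w, EB.fill w = E.fill (substT tmpl w y) := by
  let W j := Word.bindVars (tmpl j) (Sum.elim (fun i => [Sum.inr i]) fun k => (y k).map Sum.inl)
  obtain ⟨EB, hEB⟩ := E.exists_fill_eq_fill_subst W fun i => by
    simpa [W, Word.count_inr_bindVars, Fintype.sum_sum_type, List.count_singleton] using hx i
  refine ⟨EB, fun w => (hEB w).trans (congrArg E.fill (funext fun j => ?_))⟩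
  rw [substT_apply, Word.subst_bindVars]
  congr 1
  funext b
  rcases b with i | k <;> simp

lemma exists_fill_eq_fill_substT_right
    (hy : ∀ k : Fin dC, ∑ j, (tmpl j).count (Sum.inr (Sum.inr k)) = 1) (u : Fin dB → List α) :
    ∃ EC : SContext α dC, ∀ w, EC.fill w = E.fill (substT tmpl u w) := by
  let W j := Word.bindVars (tmpl j) (Sum.elim (fun i => (u i).map Sum.inl) fun k => [Sum.inr k])
  obtain ⟨EC, hEC⟩ := E.exists_fill_eq_fill_subst W fun k => by
    simpa [W, Word.count_inr_bindVars, Fintype.sum_sum_type, List.count_singleton] using hy k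
  refine ⟨EC, fun w => (hEC w).trans (congrArg E.fill (funext fun j => ?_))⟩
  rw [substT_apply, Word.subst_bindVars]
  congr 1
  funext b
  rcases b with i | k <;> simp

end SContext

theorem witnessed_composition_preserves_equiv_general {α M : Type} [DecidableEq α]
    [Monoid M]
    (L : Set (List α)) (f : ℕ) (h : List α → M)
    (hmul : ∀ a b : List α, h (a ++ b) = h a * h b)
    (hsub : TupleSubstitutable L f h)
    {dB dC e : ℕ} (he1 : 1 ≤ e) (hef : e ≤ f)
    (tmpl : Tmpl α dB dC e)
    (hx : ∀ i : Fin dB, (∑ j, (tmpl j).count (Sum.inr (Sum.inl i))) = 1)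
    (hy : ∀ i : Fin dC, (∑ j, (tmpl j).count (Sum.inr (Sum.inr i))) = 1)
    (x u : Fin dB → List α) (y v : Fin dC → List α)
    (E : SContext α e) (hE : E.fill (substT tmpl x y) ∈ L)
    (hux : TypedEquiv L h dB u x) (hvy : TypedEquiv L h dC v y) :
    TypedEquiv L h e (substT tmpl u v) (substT tmpl x y) := by
  obtain ⟨EB, hEB⟩ := E.exists_fill_eq_fill_substT_left tmpl hx y
  obtain ⟨EC, hEC⟩ := E.exists_fill_eq_fill_substT_right tmpl hy u
  have hty (j : Fin e) : h (substT tmpl u v j) = h (substT tmpl x y j) := by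
    rw [substT_apply, substT_apply]
    exact Word.apply_subst_congr h hmul (by rintro (i | k); exacts [hux.1 i, hvy.1 k]) _
  have huy : E.fill (substT tmpl u y) ∈ L := by rw [← hEB, hux.fill_mem_iff, hEB]; exact hE
  have huv : E.fill (substT tmpl u v) ∈ L := by rw [← hEC, hvy.fill_mem_iff, hEC]; exact huy
  exact ⟨hty, hsub e he1 hef _ _ hty ⟨E, huv, hE⟩⟩

/-- Witnessed composition preserves distributional equivalence: for an
`(f,h)`-tuple-substitutable `L`, a binary linear nondeleting template `ρ` with parent
arity `e ≤ f` and child arities `d_B, d_C ≤ f`, and a concrete arity-`e` context `E`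
with `E[ρ(x,y)] ∈ L`, if `u ≡_L^{d_B} x` and `v ≡_L^{d_C} y` then
`ρ(u,v) ≡_L^e ρ(x,y)`. -/
theorem witnessed_composition_preserves_equiv {α M : Type} [DecidableEq α]
    [Monoid M] [Fintype M]
    (L : Set (List α)) (f : ℕ) (h : List α → M)
    (hnil : h [] = 1) (hmul : ∀ a b : List α, h (a ++ b) = h a * h b)
    (hsub : TupleSubstitutable L f h)
    {dB dC e : ℕ} (he1 : 1 ≤ e) (hef : e ≤ f) (hBf : dB ≤ f) (hCf : dC ≤ f)
    (tmpl : Tmpl α dB dC e)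
    (hx : ∀ i : Fin dB, (∑ j, (tmpl j).count (Sum.inr (Sum.inl i))) = 1)
    (hy : ∀ i : Fin dC, (∑ j, (tmpl j).count (Sum.inr (Sum.inr i))) = 1)
    (x u : Fin dB → List α) (y v : Fin dC → List α)
    (E : SContext α e) (hE : E.fill (substT tmpl x y) ∈ L)
    (hux : TypedEquiv L h dB u x) (hvy : TypedEquiv L h dC v y) :
    TypedEquiv L h e (substT tmpl u v) (substT tmpl x y) :=
  witnessed_composition_preserves_equiv_general L f h hmul hsub he1 hef tmpl hx hy x u y v E hE hux
    hvy
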